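/- arXiv:1104.5401 — 2 statements merged into one kernel-verified Lean document; each statement's English description precedes it below -/
import Mathlib

section
/- Let r ≥ 1, let 0 < p < 1, and let 𝒫 be a hereditary property of r-graphs such that 𝒫ⁿ is nonempty for every n. For each n define c_n by Pr[G(n,p) ∈ 𝒫ⁿ] = 2^{-c_n · C(n,r)}. Then the sequence (c_n) is nondecreasing in n. -/
open Finset

/-- The set of all potential edges of an `r`-uniform hypergraph on vertex set `Fin n`:
the `r`-element subsets of the vertex set. -/
def edgeUniv (r n : ℕ) : Finset (Finset (Fin n)) := Finset.powersetCard r Finset.univ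

/-- `G` is an `r`-uniform hypergraph on `Fin n`: a set of `r`-element subsets of the vertices. -/
def IsRGraph (r n : ℕ) (G : Finset (Finset (Fin n))) : Prop := G ⊆ edgeUniv r n

/-- The probability that the random `r`-graph `G(n,p)` (each `r`-set being an edge
independently with probability `p`) belongs to the collection `A`. -/
noncomputable def prG (r n : ℕ) (p : ℝ) (A : Set (Finset (Finset (Fin n)))) : ℝ :=
  ∑ E ∈ (edgeUniv r n).powerset,
    Set.indicator A (fun E => p ^ E.card * (1 - p) ^ ((edgeUniv r n).card - E.card)) E

/-- The `r`-graph `F` on `Fin k` appears as an induced subgraph of `G` (an `r`-graph on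
`Fin n`) on the vertex subset `U`. -/
def IsInducedCopyAt (r k n : ℕ) (F : Finset (Finset (Fin k)))
    (G : Finset (Finset (Fin n))) (U : Finset (Fin n)) : Prop :=
  ∃ f : Fin k ↪ Fin n, Finset.univ.map f = U ∧
    ∀ e : Finset (Fin k), e.card = r → (e ∈ F ↔ e.map f ∈ G)

/-- `G` has an induced subgraph on the vertex subset `U` isomorphic to a member of the
family `Fam` (where `Fam k` is the set of members of the family on `k` vertices). -/
def HasCopyAt (r n : ℕ) (Fam : ∀ k, Set (Finset (Finset (Fin k))))
    (G : Finset (Finset (Fin n))) (U : Finset (Fin n)) : Prop :=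
  ∃ k, ∃ H ∈ Fam k, IsInducedCopyAt r k n H G U

/-- `Forb(Fam)ⁿ` : the `r`-graphs on `n` vertices with no induced subgraph isomorphic to a
member of `Fam`. -/
def ForbN (r : ℕ) (Fam : ∀ k, Set (Finset (Finset (Fin k)))) (n : ℕ) :
    Set (Finset (Finset (Fin n))) :=
  {G | IsRGraph r n G ∧ ∀ U, ¬ HasCopyAt r n Fam G U}

/-- A partial Steiner system with parameters `(r,m,n)`: a collection of `m`-element
subsets of `Fin n` such that every `r`-element subset is contained in at most one member. -/
def IsSteiner (r m n : ℕ) (D : Finset (Finset (Fin n))) : Prop :=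
  (∀ B ∈ D, B.card = m) ∧
  ∀ e : Finset (Fin n), e.card = r →
    ∀ B₁ ∈ D, ∀ B₂ ∈ D, e ⊆ B₁ → e ⊆ B₂ → B₁ = B₂

/-!
Write `Pr[G(n,p) ∈ Pⁿ]` as the product-measure weight of the family of edge sets of members
of `Pⁿ`. The `r`-sets of `Fin (n+1)` are covered by the `n+1` copies of the `r`-sets of `Fin n`
obtained by deleting one vertex, each `r`-set exactly `n+1-r` times, and by heredity the trace of
`Pⁿ⁺¹` on each copy lies in `Pⁿ`. A Bollobás–Thomason (Shearer-type) inequality for product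
measures, `μ(𝒜)ᵏ ≤ ∏ⱼ μ(𝒜 ∩ Tⱼ)` for a `k`-fold cover `(Tⱼ)`, then gives
`Pr_{n+1}^{n+1-r} ≤ Prₙ^{n+1}`, which is `cₙ ≤ cₙ₊₁` because `C(n+1,r)(n+1-r) = C(n,r)(n+1)`.
The product inequality is proved by induction on the ground set, splitting on one element; its
induction step is Hölder's inequality in the form of superadditivity of the geometric mean.
-/

lemma Real.geom_mean_add_le {κ : Type*} {s : Finset κ} (hs : s.Nonempty) {a b : κ → ℝ}
    (ha : ∀ j ∈ s, 0 ≤ a j) (hb : ∀ j ∈ s, 0 ≤ b j) :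
    (∏ j ∈ s, a j) ^ (#s : ℝ)⁻¹ + (∏ j ∈ s, b j) ^ (#s : ℝ)⁻¹ ≤
      (∏ j ∈ s, (a j + b j)) ^ (#s : ℝ)⁻¹ := by
  have hk : (#s : ℝ)⁻¹ ≠ 0 := by simp [hs.ne_empty]
  have hab : ∀ j ∈ s, 0 ≤ a j + b j := fun j hj => add_nonneg (ha j hj) (hb j hj)
  by_cases hzero : ∃ j ∈ s, a j + b j = 0
  · obtain ⟨j, hj, hj0⟩ := hzero
    have ha0 : a j = 0 := by linarith [ha j hj, hb j hj]
    have hb0 : b j = 0 := by linarith [ha j hj, hb j hj]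
    rw [prod_eq_zero hj ha0, prod_eq_zero hj hb0, Real.zero_rpow hk, zero_add]
    exact Real.rpow_nonneg (prod_nonneg hab) _
  push Not at hzero
  have hpos : ∀ j ∈ s, 0 < a j + b j := fun j hj => (hab j hj).lt_of_ne' (hzero j hj)
  have amgm : ∀ z : κ → ℝ, (∀ j ∈ s, 0 ≤ z j) →
      (∏ j ∈ s, z j) ^ (#s : ℝ)⁻¹ ≤ (∑ j ∈ s, z j) / #s := fun z hz => by
    simpa using Real.geom_mean_le_arith_mean s (fun _ => 1) z (by simp) (by simpa using hs) hz
  -- AM-GM for the ratios `z j / (a j + b j)`, which for `z = a` and `z = b` add up to `1`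
  have hnorm : ∀ z : κ → ℝ, (∀ j ∈ s, 0 ≤ z j) →
      (∏ j ∈ s, z j) ^ (#s : ℝ)⁻¹ ≤
        (∑ j ∈ s, z j / (a j + b j)) / #s * (∏ j ∈ s, (a j + b j)) ^ (#s : ℝ)⁻¹ := by
    intro z hz
    have hdiv : ∀ j ∈ s, 0 ≤ z j / (a j + b j) := fun j hj => div_nonneg (hz j hj) (hab j hj)
    calc (∏ j ∈ s, z j) ^ (#s : ℝ)⁻¹
        = (∏ j ∈ s, z j / (a j + b j)) ^ (#s : ℝ)⁻¹ *
            (∏ j ∈ s, (a j + b j)) ^ (#s : ℝ)⁻¹ := by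
          rw [← Real.mul_rpow (prod_nonneg hdiv) (prod_nonneg hab), ← prod_mul_distrib]
          exact congrArg (· ^ _)
            (prod_congr rfl fun j hj => (div_mul_cancel₀ _ (hpos j hj).ne').symm)
      _ ≤ _ := mul_le_mul_of_nonneg_right (amgm _ hdiv) (Real.rpow_nonneg (prod_nonneg hab) _)
  have hsum : (∑ j ∈ s, a j / (a j + b j)) + (∑ j ∈ s, b j / (a j + b j)) = #s := by
    rw [← sum_add_distrib, sum_congr rfl fun j hj => by rw [← add_div, div_self (hpos j hj).ne'],
      sum_const, nsmul_one]
  calc _ ≤ _ := add_le_add (hnorm a ha) (hnorm b hb)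
    _ = _ := by
      rw [← add_mul, ← add_div, hsum, div_self (by simp [hs.ne_empty]), one_mul]

lemma Real.add_pow_card_le_mul_prod_add {κ : Type*} {s : Finset κ} (hs : s.Nonempty)
    {a b : κ → ℝ} (ha : ∀ j ∈ s, 0 ≤ a j) (hb : ∀ j ∈ s, 0 ≤ b j) {C α β : ℝ} (hC : 0 ≤ C)
    (hα : 0 ≤ α) (hβ : 0 ≤ β) (hαC : α ^ #s ≤ C * ∏ j ∈ s, a j)
    (hβC : β ^ #s ≤ C * ∏ j ∈ s, b j) :
    (α + β) ^ #s ≤ C * ∏ j ∈ s, (a j + b j) := by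
  have hk : (0 : ℝ) < #s := by simpa using hs.card_pos
  have hroot : ∀ {x : ℝ} (f : κ → ℝ), 0 ≤ x → (∀ j ∈ s, 0 ≤ f j) →
      (x ^ #s ≤ C * ∏ j ∈ s, f j ↔ x ≤ C ^ (#s : ℝ)⁻¹ * (∏ j ∈ s, f j) ^ (#s : ℝ)⁻¹) :=
    fun f hx hf => by
      rw [← Real.mul_rpow hC (prod_nonneg hf), Real.le_rpow_inv_iff_of_pos hx
        (mul_nonneg hC (prod_nonneg hf)) hk, Real.rpow_natCast]
  rw [hroot _ (add_nonneg hα hβ) fun j hj => add_nonneg (ha j hj) (hb j hj)]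
  calc α + β ≤ C ^ (#s : ℝ)⁻¹ * ((∏ j ∈ s, a j) ^ (#s : ℝ)⁻¹ + (∏ j ∈ s, b j) ^ (#s : ℝ)⁻¹) := by
        rw [mul_add]
        exact add_le_add ((hroot a hα ha).1 hαC) ((hroot b hβ hb).1 hβC)
    _ ≤ _ := mul_le_mul_of_nonneg_left (Real.geom_mean_add_le hs ha hb) (Real.rpow_nonneg hC _)

lemma mul_add_mul_pow_le_prod {κ : Type*} {s : Finset κ} {P : κ → Prop} [DecidablePred P]
    (hsP : (s.filter P).Nonempty) {p q α β : ℝ} {a b c : κ → ℝ} (hp : 0 ≤ p) (hq : 0 ≤ q)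
    (hα : 0 ≤ α) (hβ : 0 ≤ β) (ha : ∀ j ∈ s, 0 ≤ a j) (hb : ∀ j ∈ s, 0 ≤ b j)
    (hin : ∀ j ∈ s, P j → p * a j + q * b j ≤ c j)
    (hout : ∀ j ∈ s, ¬ P j → a j ≤ c j ∧ b j ≤ c j)
    (hαa : α ^ #(s.filter P) ≤ ∏ j ∈ s, a j) (hβb : β ^ #(s.filter P) ≤ ∏ j ∈ s, b j) :
    (p * α + q * β) ^ #(s.filter P) ≤ ∏ j ∈ s, c j := by
  set t := s.filter P
  set C := ∏ j ∈ s.filter (¬ P ·), c j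
  have hC : 0 ≤ C := prod_nonneg fun j hj => by
    obtain ⟨hjs, hj⟩ := mem_filter.1 hj
    exact (ha j hjs).trans (hout j hjs hj).1
  have hsplit : ∀ f : κ → ℝ, (∀ j ∈ s, 0 ≤ f j) → (∀ j ∈ s, ¬ P j → f j ≤ c j) →
      ∀ u : ℝ, 0 ≤ u → ∀ x : ℝ, x ^ #t ≤ ∏ j ∈ s, f j → (u * x) ^ #t ≤ C * ∏ j ∈ t, u * f j := by
    intro f hf hfc u hu x hx
    rw [mul_pow, prod_mul_distrib, prod_const, mul_left_comm]
    refine mul_le_mul_of_nonneg_left ?_ (pow_nonneg hu _)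
    calc x ^ #t ≤ ∏ j ∈ s, f j := hx
      _ = (∏ j ∈ t, f j) * ∏ j ∈ s.filter (¬ P ·), f j :=
          (prod_filter_mul_prod_filter_not s P f).symm
      _ ≤ (∏ j ∈ t, f j) * C := by
          refine mul_le_mul_of_nonneg_left ?_ (prod_nonneg fun j hj => hf j (mem_filter.1 hj).1)
          exact prod_le_prod (fun j hj => hf j (mem_filter.1 hj).1)
            fun j hj => hfc j (mem_filter.1 hj).1 (mem_filter.1 hj).2
      _ = C * ∏ j ∈ t, f j := mul_comm _ _
  calc (p * α + q * β) ^ #t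
      ≤ C * ∏ j ∈ t, (p * a j + q * b j) :=
        Real.add_pow_card_le_mul_prod_add hsP
          (fun j hj => mul_nonneg hp (ha j (mem_filter.1 hj).1))
          (fun j hj => mul_nonneg hq (hb j (mem_filter.1 hj).1)) hC
          (mul_nonneg hp hα) (mul_nonneg hq hβ)
          (hsplit a ha (fun j hj hPj => (hout j hj hPj).1) p hp α hαa)
          (hsplit b hb (fun j hj hPj => (hout j hj hPj).2) q hq β hβb)
    _ ≤ C * ∏ j ∈ t, c j := by
        refine mul_le_mul_of_nonneg_left (prod_le_prod (fun j hj => ?_) fun j hj => ?_) hC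
        · have hjs := (mem_filter.1 hj).1
          exact add_nonneg (mul_nonneg hp (ha j hjs)) (mul_nonneg hq (hb j hjs))
        · exact hin j (mem_filter.1 hj).1 (mem_filter.1 hj).2
    _ = ∏ j ∈ s, c j := by rw [mul_comm, prod_filter_mul_prod_filter_not]

namespace Finset

variable {ι κ : Type*} {p q : ℝ}

/-- With `q = 1 - p` and `𝒜` a family of subsets of `E`, this is the probability that the
`p`-random subset of `E` lies in `𝒜`. -/
noncomputable def bernoulliWeight (p q : ℝ) (E : Finset ι) (𝒜 : Finset (Finset ι)) : ℝ :=
  ∑ S ∈ 𝒜, p ^ #S * q ^ (#E - #S)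

lemma bernoulliWeight_nonneg (hp : 0 ≤ p) (hq : 0 ≤ q) (E : Finset ι) (𝒜 : Finset (Finset ι)) :
    0 ≤ bernoulliWeight p q E 𝒜 :=
  sum_nonneg fun _ _ => by positivity

lemma bernoulliWeight_mono (hp : 0 ≤ p) (hq : 0 ≤ q) (E : Finset ι)
    {𝒜 ℬ : Finset (Finset ι)} (h : 𝒜 ⊆ ℬ) : bernoulliWeight p q E 𝒜 ≤ bernoulliWeight p q E ℬ :=
  sum_le_sum_of_subset_of_nonneg h fun _ _ _ => by positivity

lemma bernoulliWeight_map {ι' : Type*} (f : ι ↪ ι') (E : Finset ι) (𝒜 : Finset (Finset ι)) :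
    bernoulliWeight p q (E.map f) (𝒜.map (mapEmbedding f).toEmbedding) =
      bernoulliWeight p q E 𝒜 := by
  simp [bernoulliWeight]

lemma bernoulliWeight_eq_add [DecidableEq ι] {E : Finset ι} {x : ι} (hx : x ∈ E)
    {𝒜 : Finset (Finset ι)} (h𝒜 : ∀ S ∈ 𝒜, S ⊆ E) :
    bernoulliWeight p q E 𝒜 =
      p * bernoulliWeight p q (E.erase x) (𝒜.memberSubfamily x) +
        q * bernoulliWeight p q (E.erase x) (𝒜.nonMemberSubfamily x) := by
  have hE : #E = #(E.erase x) + 1 := (card_erase_add_one hx).symm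
  have hinj : Set.InjOn (fun S : Finset ι => S.erase x) ↑(𝒜.filter fun S => x ∈ S) :=
    (erase_injOn' x).mono fun S hS => (mem_filter.1 hS).2
  rw [bernoulliWeight, ← sum_filter_add_sum_filter_not 𝒜 (fun S => x ∈ S), memberSubfamily,
    bernoulliWeight, sum_image hinj, bernoulliWeight, nonMemberSubfamily, mul_sum, mul_sum]
  congr 1
  · refine sum_congr rfl fun S hS => ?_
    rw [← card_erase_add_one (mem_filter.1 hS).2, hE, Nat.add_sub_add_right, pow_succ]
    ring
  · refine sum_congr rfl fun S hS => ?_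
    obtain ⟨hS𝒜, hxS⟩ := mem_filter.1 hS
    have hSE : #S ≤ #(E.erase x) := card_le_card (subset_erase.2 ⟨h𝒜 S hS𝒜, hxS⟩)
    rw [hE, Nat.sub_add_comm hSE, pow_succ]
    ring

section Trace
variable [DecidableEq ι] {x : ι} {T : Finset ι}

lemma memberSubfamily_image_inter_erase (hx : x ∈ T) (𝒜 : Finset (Finset ι)) :
    (𝒜.memberSubfamily x).image (· ∩ T.erase x) = (𝒜.image (· ∩ T)).memberSubfamily x := by
  simp only [memberSubfamily, filter_image, image_image]
  congr 1
  · funext S; simp [inter_erase]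
  · exact filter_congr fun S _ => by simp [hx]

lemma nonMemberSubfamily_image_inter_erase (hx : x ∈ T) (𝒜 : Finset (Finset ι)) :
    (𝒜.nonMemberSubfamily x).image (· ∩ T.erase x) =
      (𝒜.image (· ∩ T)).nonMemberSubfamily x := by
  simp only [nonMemberSubfamily, filter_image, mem_inter, hx, and_true]
  exact image_congr fun S hS => by
    simp [inter_erase, erase_eq_of_notMem fun h => (mem_filter.1 hS).2 (mem_of_mem_inter_left h)]

lemma memberSubfamily_image_inter_subset (hx : x ∉ T) (𝒜 : Finset (Finset ι)) :
    (𝒜.memberSubfamily x).image (· ∩ T) ⊆ 𝒜.image (· ∩ T) := by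
  simp only [memberSubfamily, image_image]
  intro U hU
  obtain ⟨S, hS, rfl⟩ := mem_image.1 hU
  exact mem_image.2 ⟨S, (mem_filter.1 hS).1, by simp [erase_inter, erase_eq_of_notMem, hx]⟩

end Trace

-- The Bollobás–Thomason box inequality for product measures.
theorem bernoulliWeight_pow_le_prod [DecidableEq ι] (hp : 0 ≤ p) (hq : 0 ≤ q) {k : ℕ}
    (hk : k ≠ 0) (s : Finset κ) (E : Finset ι) (T : κ → Finset ι) (hT : ∀ j ∈ s, T j ⊆ E)
    (hcover : ∀ x ∈ E, #(s.filter (x ∈ T ·)) = k) (𝒜 : Finset (Finset ι))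
    (h𝒜 : ∀ S ∈ 𝒜, S ⊆ E) :
    bernoulliWeight p q E 𝒜 ^ k ≤ ∏ j ∈ s, bernoulliWeight p q (T j) (𝒜.image (· ∩ T j)) := by
  induction E using Finset.strongInduction generalizing T 𝒜 with | H E ih =>
  rcases E.eq_empty_or_nonempty with rfl | ⟨x, hx⟩
  · have hT0 : ∀ j ∈ s, T j = ∅ := fun j hj => subset_empty.1 (hT j hj)
    rcases subset_singleton_iff.1 fun S hS => mem_singleton.2 (subset_empty.1 (h𝒜 S hS))
      with rfl | rfl
    · simp only [bernoulliWeight, sum_empty, image_empty, zero_pow hk]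
      exact prod_nonneg fun _ _ => le_rfl
    · rw [prod_eq_one fun j hj => by simp [bernoulliWeight, hT0 j hj]]
      simp [bernoulliWeight]
  set T' := fun j => (T j).erase x
  have ih' := fun ℬ hℬ => ih (E.erase x) (erase_ssubset hx) T'
    (fun j hj => erase_subset_erase x (hT j hj))
    (fun y hy => by
      rw [← hcover y (mem_of_mem_erase hy)]
      exact congrArg card (filter_congr fun j _ => by simp [T', ne_of_mem_erase hy]))
    ℬ hℬ
  have ih_mem := ih' (𝒜.memberSubfamily x) fun S hS => by
    obtain ⟨hS𝒜, hxS⟩ := mem_memberSubfamily.1 hS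
    exact subset_erase.2 ⟨(subset_insert x S).trans (h𝒜 _ hS𝒜), hxS⟩
  have ih_non := ih' (𝒜.nonMemberSubfamily x) fun S hS => by
    obtain ⟨hS𝒜, hxS⟩ := mem_nonMemberSubfamily.1 hS
    exact subset_erase.2 ⟨h𝒜 _ hS𝒜, hxS⟩
  have hsP : (s.filter (x ∈ T ·)).Nonempty := by
    rw [← card_pos, hcover x hx]; exact Nat.pos_of_ne_zero hk
  rw [bernoulliWeight_eq_add hx h𝒜, ← hcover x hx]
  rw [← hcover x hx] at ih_mem ih_non
  refine mul_add_mul_pow_le_prod hsP hp hq (bernoulliWeight_nonneg hp hq _ _)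
    (bernoulliWeight_nonneg hp hq _ _) (fun _ _ => bernoulliWeight_nonneg hp hq _ _)
    (fun _ _ => bernoulliWeight_nonneg hp hq _ _) (fun j _ hxT => ?_) (fun j _ hxT => ?_)
    ih_mem ih_non
  · rw [bernoulliWeight_eq_add hxT (fun S hS => by
        obtain ⟨S', -, rfl⟩ := mem_image.1 hS; exact inter_subset_right),
      memberSubfamily_image_inter_erase hxT, nonMemberSubfamily_image_inter_erase hxT]
  · simp only [T', erase_eq_of_notMem hxT]
    exact ⟨bernoulliWeight_mono hp hq _ (memberSubfamily_image_inter_subset hxT 𝒜),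
      bernoulliWeight_mono hp hq _ (image_subset_image (filter_subset _ _))⟩

end Finset

section RGraph

def IsHereditary (r : ℕ) (P : ∀ n, Set (Finset (Finset (Fin n)))) : Prop :=
  ∀ n, ∀ G ∈ P n, ∀ (k : ℕ) (H : Finset (Finset (Fin k))) (U : Finset (Fin n)),
    IsRGraph r k H → IsInducedCopyAt r k n H G U → H ∈ P k

open Classical in
noncomputable def rGraphsIn (r n : ℕ) (A : Set (Finset (Finset (Fin n)))) :
    Finset (Finset (Finset (Fin n))) :=
  (edgeUniv r n).powerset.filter (· ∈ A)

variable {r n : ℕ}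

lemma mem_edgeUniv {e : Finset (Fin n)} : e ∈ edgeUniv r n ↔ #e = r := by
  simp [edgeUniv]

lemma prG_eq_bernoulliWeight (p : ℝ) (A : Set (Finset (Finset (Fin n)))) :
    prG r n p A = bernoulliWeight p (1 - p) (edgeUniv r n) (rGraphsIn r n A) := by
  classical
  rw [prG, bernoulliWeight, rGraphsIn, sum_filter]
  exact sum_congr rfl fun G _ => by rw [Set.indicator_apply]

lemma map_edgeUniv_succAboveEmb (v : Fin (n + 1)) :
    (edgeUniv r n).map (mapEmbedding v.succAboveEmb).toEmbedding =
      (edgeUniv r (n + 1)).filter (v ∉ ·) := by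
  ext e
  have hrange : (univ : Finset (Fin n)).map v.succAboveEmb = {v}ᶜ := by
    ext w; simp [Fin.exists_succAbove_eq_iff]
  simp [edgeUniv, ← powersetCard_map, hrange, subset_compl_singleton, and_comm]

lemma mem_rGraphsIn {A : Set (Finset (Finset (Fin n)))} {G : Finset (Finset (Fin n))} :
    G ∈ rGraphsIn r n A ↔ IsRGraph r n G ∧ G ∈ A := by
  simp [rGraphsIn, IsRGraph]

lemma bernoulliWeight_image_inter_le {P : ∀ n, Set (Finset (Finset (Fin n)))}
    (hP : IsHereditary r P) {k : ℕ} (f : Fin k ↪ Fin n) {p q : ℝ} (hp : 0 ≤ p) (hq : 0 ≤ q) :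
    bernoulliWeight p q ((edgeUniv r k).map (mapEmbedding f).toEmbedding)
        ((rGraphsIn r n (P n)).image (· ∩ (edgeUniv r k).map (mapEmbedding f).toEmbedding)) ≤
      bernoulliWeight p q (edgeUniv r k) (rGraphsIn r k (P k)) := by
  rw [← bernoulliWeight_map (mapEmbedding f).toEmbedding]
  refine bernoulliWeight_mono hp hq _ fun X hX => ?_
  obtain ⟨G, hG, rfl⟩ := mem_image.1 hX
  set H := (edgeUniv r k).filter (fun e => e.map f ∈ G)
  have hH : IsRGraph r k H := filter_subset _ _
  have hcopy : IsInducedCopyAt r k n H G (univ.map f) :=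
    ⟨f, rfl, fun e he => by simp [H, mem_edgeUniv, he]⟩
  refine mem_map.2 ⟨H, mem_rGraphsIn.2 ⟨hH, hP n G (mem_rGraphsIn.1 hG).2 k H _ hH hcopy⟩, ?_⟩
  ext e
  simp only [H, mem_map, mem_filter, mem_inter, RelEmbedding.coe_toEmbedding, mapEmbedding_apply]
  constructor
  · rintro ⟨e', ⟨he', heG⟩, rfl⟩
    exact ⟨heG, e', he', rfl⟩
  · rintro ⟨heG, e', he', rfl⟩
    exact ⟨e', ⟨he', heG⟩, rfl⟩

lemma prG_succ_pow_le {P : ∀ n, Set (Finset (Finset (Fin n)))} (hP : IsHereditary r P)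
    (hrn : r ≤ n) {p : ℝ} (hp : 0 ≤ p) (hq : 0 ≤ 1 - p) :
    prG r (n + 1) p (P (n + 1)) ^ (n + 1 - r) ≤ prG r n p (P n) ^ (n + 1) := by
  rw [prG_eq_bernoulliWeight, prG_eq_bernoulliWeight]
  set T := fun v : Fin (n + 1) => (edgeUniv r n).map (mapEmbedding v.succAboveEmb).toEmbedding
  have hcover : ∀ e ∈ edgeUniv r (n + 1), #(univ.filter (e ∈ T ·)) = n + 1 - r := by
    intro e he
    have hcompl : univ.filter (e ∈ T ·) = eᶜ := by
      ext v; simp [T, map_edgeUniv_succAboveEmb, he]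
    rw [hcompl, card_compl, Fintype.card_fin, mem_edgeUniv.1 he]
  calc _ ≤ ∏ v, bernoulliWeight p (1 - p) (T v)
          ((rGraphsIn r (n + 1) (P (n + 1))).image (· ∩ T v)) :=
        bernoulliWeight_pow_le_prod hp hq (by omega) univ _ T
          (fun v _ => by simp only [T, map_edgeUniv_succAboveEmb]; exact filter_subset _ _)
          hcover _ fun G hG => (mem_rGraphsIn.1 hG).1
    _ ≤ ∏ _v : Fin (n + 1), bernoulliWeight p (1 - p) (edgeUniv r n) (rGraphsIn r n (P n)) :=
        prod_le_prod (fun _ _ => bernoulliWeight_nonneg hp hq _ _)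
          fun v _ => bernoulliWeight_image_inter_le hP _ hp hq
    _ = _ := by rw [prod_const, card_univ, Fintype.card_fin]

lemma le_of_rpow_neg_mul_pow_le {B x y : ℝ} (hB : 1 < B) {M N a b : ℕ}
    (h : (B ^ (-x * M)) ^ a ≤ (B ^ (-y * N)) ^ b) (hMN : M * a = N * b) (hpos : 0 < N * b) :
    y ≤ x := by
  have hB0 : 0 ≤ B := by linarith
  rw [← Real.rpow_natCast, ← Real.rpow_natCast, ← Real.rpow_mul hB0, ← Real.rpow_mul hB0,
    Real.rpow_le_rpow_left_iff hB, mul_assoc, mul_assoc] at h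
  have hMN' : (M * a : ℝ) = N * b := by exact_mod_cast hMN
  have hpos' : (0 : ℝ) < N * b := by exact_mod_cast hpos
  rw [hMN'] at h
  linarith [le_of_mul_le_mul_right h hpos']

end RGraph

theorem stmt_1_general (r : ℕ) (p : ℝ) (hp0 : 0 < p) (hp1 : p < 1)
    (P : ∀ n, Set (Finset (Finset (Fin n))))
    (hPhered : ∀ n, ∀ G ∈ P n, ∀ (k : ℕ) (H : Finset (Finset (Fin k))) (U : Finset (Fin n)),
      IsRGraph r k H → IsInducedCopyAt r k n H G U → H ∈ P k)
    (c : ℕ → ℝ)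
    (hc : ∀ n, prG r n p (P n) = 2 ^ (-(c n) * (n.choose r : ℝ))) :
    ∀ a b : ℕ, r ≤ a → a ≤ b → c a ≤ c b := by
  have hstep : ∀ n ≥ r, c n ≤ c (n + 1) := fun n hrn => by
    have h := prG_succ_pow_le hPhered hrn hp0.le (by linarith)
    rw [hc, hc] at h
    exact le_of_rpow_neg_mul_pow_le one_lt_two h (Nat.choose_mul_succ_eq n r).symm
      (Nat.mul_pos (Nat.choose_pos hrn) n.succ_pos)
  intro a b hra hab
  exact monotoneOn_nat_Ici_of_le_succ hstep hra (hra.trans hab) hab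

/-- **Bollobás–Thomason.** For a hereditary property `P` of `r`-graphs with `Pⁿ` nonempty
for every `n`, defining `c_n` by `Pr[G(n,p) ∈ Pⁿ] = 2 ^ (-c_n * C(n,r))`, the sequence
`c_n` is nondecreasing (for `n ≥ r`, where `c_n` is determined by the defining equation). -/
theorem stmt_1 (r : ℕ) (hr : 1 ≤ r) (p : ℝ) (hp0 : 0 < p) (hp1 : p < 1)
    (P : ∀ n, Set (Finset (Finset (Fin n))))
    (hPgraph : ∀ n, ∀ G ∈ P n, IsRGraph r n G)
    (hPhered : ∀ n, ∀ G ∈ P n, ∀ (k : ℕ) (H : Finset (Finset (Fin k))) (U : Finset (Fin n)),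
      IsRGraph r k H → IsInducedCopyAt r k n H G U → H ∈ P k)
    (hPne : ∀ n, (P n).Nonempty)
    (c : ℕ → ℝ)
    (hc : ∀ n, prG r n p (P n) = 2 ^ (-(c n) * (n.choose r : ℝ))) :
    ∀ a b : ℕ, r ≤ a → a ≤ b → c a ≤ c b :=
  stmt_1_general r p hp0 hp1 P hPhered c hc
end

section
/- (Erdős–Simonovits supersaturation) Let ℱ be a collection of r-graphs each with at least t vertices, let ex(n,ℱ) denote the maximum number of edges of an r-graph on n vertices containing no (not necessarily induced) subgraph isomorphic to a member of ℱ, and suppose γ = lim_{n→∞} ex(n,ℱ)·C(n,r)^{-1} exists. Then for every ε > 0 there exist δ > 0 and n₀ (depending only on ε and ℱ) such that every r-graph G on n > n₀ vertices with more than (γ+ε)·C(n,r) edges contains at least δ·n^t subgraphs each isomorphic to a member of ℱ, i.e., there are at least δ·n^t pairs (U,E') with U a vertex subset of G and E' a subset of the edges of G lying inside U such that (U,E') is isomorphic to a member of ℱ. -/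
open Finset

/-- The pair `(U, E')` (a vertex subset of `Fin n` together with a set of edges) is
isomorphic, as an `r`-graph, to the `r`-graph `H` on `Fin k`. -/
def IsIsoPair (k n : ℕ) (H : Finset (Finset (Fin k)))
    (U : Finset (Fin n)) (E' : Finset (Finset (Fin n))) : Prop :=
  ∃ f : Fin k ↪ Fin n, Finset.univ.map f = U ∧ E' = H.image (fun e => e.map f)

/-- `G` contains a (not necessarily induced) subgraph isomorphic to a member of `Fam`. -/
def ContainsSub (n : ℕ) (Fam : ∀ k, Set (Finset (Finset (Fin k))))
    (G : Finset (Finset (Fin n))) : Prop :=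
  ∃ k, ∃ H ∈ Fam k, ∃ (U : Finset (Fin n)) (E' : Finset (Finset (Fin n))),
    E' ⊆ G ∧ IsIsoPair k n H U E'

/-- `ex(n,Fam)`: the maximum number of edges of an `r`-graph on `n` vertices containing
no (not necessarily induced) subgraph isomorphic to a member of `Fam`. -/
noncomputable def exF (r : ℕ) (Fam : ∀ k, Set (Finset (Finset (Fin k)))) (n : ℕ) : ℕ :=
  sSup {j : ℕ | ∃ G : Finset (Finset (Fin n)),
    IsRGraph r n G ∧ ¬ ContainsSub n Fam G ∧ j = G.card}

/-!
Fix `m` with `ex(m, 𝓕) ≤ (γ + ε/2) C(m, r)`. Double counting the edges of `G` against the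
`m`-subsets of the vertices shows that more than `(ε/2) C(n, m)` of these `m`-sets `S` span more
than `ex(m, 𝓕)` edges, so each such `S` contains a copy of a member of `𝓕`. A copy has at least
`t` vertices, so it lies in at most `C(n - t, m - t)` of the `m`-sets. Hence there are at least
`(ε/2) C(n, m) / C(n - t, m - t) = (ε/2) C(n, t) / C(m, t)` copies, and `C(n, t) ≥ n^t / (2^t t!)`
once `n ≥ 2t`.
-/

theorem pow_le_two_pow_mul_factorial_mul_choose {n t : ℕ} (h : 2 * t ≤ n) :
    n ^ t ≤ 2 ^ t * t.factorial * n.choose t :=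
  calc n ^ t ≤ (2 * (n + 1 - t)) ^ t := Nat.pow_le_pow_left (by omega) t
    _ = 2 ^ t * (n + 1 - t) ^ t := Nat.mul_pow 2 _ t
    _ ≤ 2 ^ t * n.descFactorial t := by gcongr; exact Nat.pow_sub_le_descFactorial n t
    _ = 2 ^ t * t.factorial * n.choose t := by
      rw [Nat.descFactorial_eq_factorial_mul_choose, mul_assoc]

theorem mul_choose_le_of_mul_choose_le {n m t : ℕ} (htm : t ≤ m) (hmn : m ≤ n) {x y : ℝ}
    (h : x * n.choose m ≤ (n - t).choose (m - t) * y) : x * n.choose t ≤ m.choose t * y := by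
  have hid : (n.choose m * m.choose t : ℝ) = n.choose t * (n - t).choose (m - t) := by
    exact_mod_cast Nat.choose_mul htm
  have hpos : (0 : ℝ) < (n - t).choose (m - t) := by exact_mod_cast Nat.choose_pos (by omega)
  refine le_of_mul_le_mul_right ?_ hpos
  linarith [mul_le_mul_of_nonneg_right h (Nat.cast_nonneg (m.choose t)), congrArg (x * ·) hid]

section Counting

variable {α : Type*} [Fintype α] [DecidableEq α]

theorem sum_card_filter_subset_powersetCard {G : Finset (Finset α)} {r m : ℕ}
    (hG : ∀ e ∈ G, #e = r) (hrm : r ≤ m) :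
    ∑ S ∈ powersetCard m univ, #{e ∈ G | e ⊆ S} = #G * (Fintype.card α - r).choose (m - r) := by
  have hdouble := sum_card_bipartiteAbove_eq_sum_card_bipartiteBelow
    (s := powersetCard m (univ : Finset α)) (t := G) (r := fun S e => e ⊆ S)
  simp only [bipartiteAbove, bipartiteBelow] at hdouble
  rw [hdouble, ← smul_eq_mul, ← sum_const]
  refine sum_congr rfl fun e he => ?_
  rw [card_filter_powersetCard_subset e univ m (subset_univ e) (hG e he ▸ hrm), card_univ,
    hG e he]

theorem sum_le_card_filter_lt_mul_add {ι : Type*} (s : Finset ι) {f : ι → ℕ} {a b : ℕ}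
    (hf : ∀ i ∈ s, f i ≤ b) :
    ∑ i ∈ s, f i ≤ #{i ∈ s | a < f i} * b + #s * a := by
  rw [← sum_filter_add_sum_filter_not s (fun i => a < f i)]
  gcongr
  · simpa using sum_le_card_nsmul _ f b fun i hi => hf i (mem_filter.1 hi).1
  · calc ∑ i ∈ s with ¬a < f i, f i ≤ #{i ∈ s | ¬a < f i} * a := by
          simpa using sum_le_card_nsmul _ f a fun i hi => not_lt.1 (mem_filter.1 hi).2
      _ ≤ #s * a := by gcongr; exact filter_subset _ _

theorem mul_choose_lt_card_filter_lt {G : Finset (Finset α)} {r m a : ℕ} {c ε : ℝ}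
    (hG : ∀ e ∈ G, #e = r) (hrm : r ≤ m) (hmn : m ≤ Fintype.card α)
    (ha : (a : ℝ) ≤ c * m.choose r) (hGcard : (c + ε) * (Fintype.card α).choose r < #G) :
    ε * (Fintype.card α).choose m < #{S ∈ powersetCard m univ | a < #{e ∈ G | e ⊆ S}} := by
  set n := Fintype.card α
  have hbound := sum_le_card_filter_lt_mul_add (powersetCard m (univ : Finset α))
    (f := fun S => #{e ∈ G | e ⊆ S}) (a := a) (b := m.choose r) fun S hS => by
      rw [← (mem_powersetCard.1 hS).2, ← card_powersetCard]
      exact card_le_card fun e he =>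
        mem_powersetCard.2 ⟨(mem_filter.1 he).2, hG e (mem_filter.1 he).1⟩
  rw [sum_card_filter_subset_powersetCard hG hrm, card_powersetCard, card_univ] at hbound
  have hbound' : (#G * (n - r).choose (m - r) : ℝ) ≤
      #{S ∈ powersetCard m univ | a < #{e ∈ G | e ⊆ S}} * m.choose r + n.choose m * a := by
    exact_mod_cast hbound
  have hid : (n.choose m * m.choose r : ℝ) = n.choose r * (n - r).choose (m - r) := by
    exact_mod_cast Nat.choose_mul hrm
  have hpos : (0 : ℝ) < (n - r).choose (m - r) := by exact_mod_cast Nat.choose_pos (by omega)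
  have hmr : (0 : ℝ) < m.choose r := by exact_mod_cast Nat.choose_pos hrm
  refine lt_of_mul_lt_mul_right ?_ hmr.le
  linarith [mul_lt_mul_of_pos_right hGcard hpos,
    mul_le_mul_of_nonneg_left ha (Nat.cast_nonneg (n.choose m)), congrArg (c * ·) hid,
    congrArg (ε * ·) hid]

theorem card_le_choose_mul_card_of_forall_exists_subset {ι : Type*} {m t : ℕ} (htm : t ≤ m)
    {A : Finset (Finset α)} (hA : ∀ S ∈ A, #S = m) {P : Finset ι} {V : ι → Finset α}
    (hV : ∀ p ∈ P, t ≤ #(V p)) (hcover : ∀ S ∈ A, ∃ p ∈ P, V p ⊆ S) :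
    #A ≤ (Fintype.card α - t).choose (m - t) * #P := by
  calc #A ≤ #(P.biUnion fun p => {S ∈ powersetCard m univ | V p ⊆ S}) :=
        card_le_card fun S hS => by
          obtain ⟨p, hp, hpS⟩ := hcover S hS
          exact mem_biUnion.2
            ⟨p, hp, mem_filter.2 ⟨mem_powersetCard.2 ⟨subset_univ _, hA S hS⟩, hpS⟩⟩
    _ ≤ ∑ p ∈ P, #{S ∈ powersetCard m univ | V p ⊆ S} := card_biUnion_le
    _ ≤ ∑ _p ∈ P, (Fintype.card α - t).choose (m - t) := sum_le_sum fun p hp => by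
        obtain ⟨T, hTV, hT⟩ := exists_subset_card_eq (hV p hp)
        calc #{S ∈ powersetCard m univ | V p ⊆ S} ≤ #{S ∈ powersetCard m univ | T ⊆ S} :=
              card_le_card fun S hS =>
                mem_filter.2 ⟨(mem_filter.1 hS).1, hTV.trans (mem_filter.1 hS).2⟩
          _ = _ := by
            rw [card_filter_powersetCard_subset T univ m (subset_univ T) (hT ▸ htm), card_univ, hT]
    _ = _ := by rw [sum_const, smul_eq_mul, mul_comm]

end Counting

def subgraphCopies (n : ℕ) (Fam : ∀ k, Set (Finset (Finset (Fin k))))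
    (G : Finset (Finset (Fin n))) : Set (Finset (Fin n) × Finset (Finset (Fin n))) :=
  {q | q.2 ⊆ G ∧ ∃ k, ∃ H ∈ Fam k, IsIsoPair k n H q.1 q.2}

def comapEdges {m n : ℕ} (g : Fin m ↪ Fin n) (G : Finset (Finset (Fin n))) :
    Finset (Finset (Fin m)) :=
  {e | e.map g ∈ G}

section Hypergraph

variable {r k m n : ℕ} {G : Finset (Finset (Fin n))}

theorem IsRGraph.comapEdges (hG : IsRGraph r n G) (g : Fin m ↪ Fin n) :
    IsRGraph r m (comapEdges g G) := fun e he => by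
  have := hG (mem_filter.1 he).2
  simp only [edgeUniv, mem_powersetCard, card_map] at this ⊢
  exact ⟨subset_univ _, this.2⟩

theorem card_filter_subset_map_le_card_comapEdges (g : Fin m ↪ Fin n)
    (G : Finset (Finset (Fin n))) :
    #{e ∈ G | e ⊆ univ.map g} ≤ #(comapEdges g G) := by
  refine le_trans (card_le_card ?_) (card_image_le (f := fun e => e.map g))
  intro e he
  obtain ⟨he, heg⟩ := mem_filter.1 he
  obtain ⟨u, -, rfl⟩ := subset_map_iff.1 heg
  exact mem_image_of_mem _ (mem_filter.2 ⟨mem_univ _, he⟩)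

theorem IsIsoPair.card_eq {H : Finset (Finset (Fin k))} {U : Finset (Fin n)}
    {E' : Finset (Finset (Fin n))} (h : IsIsoPair k n H U E') : #U = k := by
  obtain ⟨f, rfl, -⟩ := h
  simp

theorem IsIsoPair.map {N : ℕ} {H : Finset (Finset (Fin k))} {U : Finset (Fin n)}
    {E' : Finset (Finset (Fin n))} (h : IsIsoPair k n H U E') (g : Fin n ↪ Fin N) :
    IsIsoPair k N H (U.map g) (E'.image (·.map g)) := by
  obtain ⟨f, rfl, rfl⟩ := h
  refine ⟨f.trans g, by rw [map_map], ?_⟩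
  rw [image_image]
  exact image_congr fun e _ => by simp [map_map]

theorem le_exF {Fam : ∀ k, Set (Finset (Finset (Fin k)))} (hG : IsRGraph r n G)
    (hfree : ¬ ContainsSub n Fam G) : #G ≤ exF r Fam n :=
  le_csSup ⟨#(edgeUniv r n), fun _ ⟨_, hG', _, hj⟩ => hj ▸ card_le_card hG'⟩ ⟨G, hG, hfree, rfl⟩

theorem exists_mem_subgraphCopies_subset_of_exF_lt {Fam : ∀ k, Set (Finset (Finset (Fin k)))}
    (hG : IsRGraph r n G) {S : Finset (Fin n)} (h : exF r Fam #S < #{e ∈ G | e ⊆ S}) :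
    ∃ q ∈ subgraphCopies n Fam G, q.1 ⊆ S := by
  set g := (S.orderEmbOfFin rfl).toEmbedding
  have hgS : univ.map g = S := map_orderEmbOfFin_univ S rfl
  have hcontains : ContainsSub #S Fam (comapEdges g G) := by
    by_contra hfree
    have hle := card_filter_subset_map_le_card_comapEdges g G
    rw [hgS] at hle
    exact absurd (le_exF (hG.comapEdges g) hfree) (by omega)
  obtain ⟨k, H, hH, U, E', hE'G, hiso⟩ := hcontains
  refine ⟨(U.map g, E'.image (·.map g)), ⟨?_, k, H, hH, hiso.map g⟩,
    (map_subset_map.2 (subset_univ U)).trans hgS.le⟩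
  intro e he
  obtain ⟨u, hu, rfl⟩ := mem_image.1 he
  exact (mem_filter.1 (hE'G hu)).2

theorem card_filter_exF_lt_le_choose_mul_ncard_subgraphCopies {t : ℕ}
    {Fam : ∀ k, Set (Finset (Finset (Fin k)))} (hFam : ∀ k, ∀ H ∈ Fam k, t ≤ k)
    (hG : IsRGraph r n G) (htm : t ≤ m) :
    #{S ∈ powersetCard m (univ : Finset (Fin n)) | exF r Fam m < #{e ∈ G | e ⊆ S}} ≤
      (n - t).choose (m - t) * (subgraphCopies n Fam G).ncard := by
  have hfin := (subgraphCopies n Fam G).toFinite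
  have hsize : ∀ q ∈ hfin.toFinset, t ≤ #q.1 := fun q hq => by
    obtain ⟨-, k, H, hH, hiso⟩ := hfin.mem_toFinset.1 hq
    exact hiso.card_eq ▸ hFam k H hH
  have hcover : ∀ S ∈ {S ∈ powersetCard m (univ : Finset (Fin n)) |
      exF r Fam m < #{e ∈ G | e ⊆ S}}, ∃ q ∈ hfin.toFinset, q.1 ⊆ S := fun S hS => by
    obtain ⟨hS, hdense⟩ := mem_filter.1 hS
    obtain ⟨q, hq, hqS⟩ := exists_mem_subgraphCopies_subset_of_exF_lt (Fam := Fam) hG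
      (by rw [(mem_powersetCard.1 hS).2]; exact hdense)
    exact ⟨q, hfin.mem_toFinset.2 hq, hqS⟩
  simpa only [Fintype.card_fin, ← Set.ncard_eq_toFinset_card _ hfin] using
    card_le_choose_mul_card_of_forall_exists_subset htm
      (fun S hS => (mem_powersetCard.1 (mem_filter.1 hS).1).2) hsize hcover

end Hypergraph

/-- **Erdős–Simonovits supersaturation.** If each member of `Fam` has at least `t`
vertices and `γ = lim ex(n,Fam)/C(n,r)` exists, then for every `ε > 0` there are
`δ > 0` and `n₀` such that every `r`-graph on `n > n₀` vertices with more than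
`(γ+ε) C(n,r)` edges contains at least `δ n^t` subgraphs (pairs `(U,E')`) isomorphic
to members of `Fam`. -/
theorem stmt_12 (r t : ℕ) (Fam : ∀ k, Set (Finset (Finset (Fin k))))
    (hFam : ∀ k, ∀ H ∈ Fam k, IsRGraph r k H ∧ t ≤ k)
    (γ : ℝ)
    (hγ : Filter.Tendsto (fun n => (exF r Fam n : ℝ) / (n.choose r : ℝ))
      Filter.atTop (nhds γ))
    (ε : ℝ) (hε : 0 < ε) :
    ∃ (δ : ℝ) (n₀ : ℕ), 0 < δ ∧ ∀ n, n₀ < n →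
      ∀ G : Finset (Finset (Fin n)), IsRGraph r n G →
      (γ + ε) * (n.choose r : ℝ) < (G.card : ℝ) →
      δ * (n : ℝ) ^ t ≤
        (Set.ncard {q : Finset (Fin n) × Finset (Finset (Fin n)) |
          q.2 ⊆ G ∧ ∃ k, ∃ H ∈ Fam k, IsIsoPair k n H q.1 q.2} : ℝ) := by
  obtain ⟨m, hex, hm⟩ := ((hγ.eventually (gt_mem_nhds (by linarith : γ < γ + ε / 2))).and
    (Filter.eventually_ge_atTop (max r t))).exists
  have hrm : r ≤ m := le_of_max_le_left hm
  have htm : t ≤ m := le_of_max_le_right hm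
  have hexm : (exF r Fam m : ℝ) ≤ (γ + ε / 2) * m.choose r :=
    ((div_lt_iff₀ (by exact_mod_cast Nat.choose_pos hrm)).1 hex).le
  have hmt : (0 : ℝ) < m.choose t := by exact_mod_cast Nat.choose_pos htm
  refine ⟨ε / (2 * (2 ^ t * t.factorial * m.choose t)), max m (2 * t),
    div_pos hε (by positivity), fun n hn G hG hGcard => ?_⟩
  set D := {S ∈ powersetCard m (univ : Finset (Fin n)) | exF r Fam m < #{e ∈ G | e ⊆ S}}
  have hD : ε / 2 * n.choose m < #D := by
    simpa only [Fintype.card_fin] using mul_choose_lt_card_filter_lt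
      (fun e he => (mem_powersetCard.1 (hG he)).2) hrm (by rw [Fintype.card_fin]; omega) hexm
      (by rwa [Fintype.card_fin, add_assoc, add_halves])
  have hcount := card_filter_exF_lt_le_choose_mul_ncard_subgraphCopies
    (fun k H hH => (hFam k H hH).2) hG htm
  have hcopies := mul_choose_le_of_mul_choose_le htm (by omega)
    (y := (subgraphCopies n Fam G).ncard) (hD.le.trans (by exact_mod_cast hcount))
  have hpow : (n : ℝ) ^ t ≤ 2 ^ t * t.factorial * n.choose t := by
    exact_mod_cast pow_le_two_pow_mul_factorial_mul_choose (by omega)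
  change _ ≤ ((subgraphCopies n Fam G).ncard : ℝ)
  calc ε / (2 * (2 ^ t * t.factorial * m.choose t)) * n ^ t
      ≤ ε / (2 * (2 ^ t * t.factorial * m.choose t)) * (2 ^ t * t.factorial * n.choose t) := by
        gcongr
    _ = ε / 2 * n.choose t / m.choose t := by field_simp
    _ ≤ _ := by rw [div_le_iff₀ hmt]; linarith
end
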